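/- arXiv:1608.03766 — 3 statements merged into one kernel-verified Lean document; each statement's English description precedes it below -/
import Mathlib

section
/- Let H = L²(0,1), let E = C([0,1]) with the supremum norm, and let ι : E → H be the canonical continuous linear embedding. For every φ ∈ C¹_b(E) there exists a sequence (φ_n) ⊆ C¹_b(H) such that: (i) sup_n ‖φ_n‖_∞ ≤ ‖φ‖_∞; (ii) for every x ∈ E, φ_n(ι x) → φ(x) as n → ∞; (iii) for all x, z ∈ E, ⟨Dφ_n(ι x), ι z⟩_H → Dφ(x)(z) as n → ∞; (iv) for every z ∈ E, sup_n sup_{y ∈ H} |⟨Dφ_n(y), ι z⟩_H| < ∞. -/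
/-!
Map `H` back into `E` by the piecewise-linear quasi-interpolant
`P_N y = ∑_{k ≤ N} (⨍_{cell k} y) • hat_k`, where `hat_k` is the hat function at the node `k / N`
and `cell k` is a mesh cell of width `1 / N` next to that node. Each `P_N : H → E` is continuous
linear, and since the hats form a partition of unity, `‖P_N (ι x) - x‖_∞` is at most the
oscillation of `x` over distances `2 / N`; hence `P_N (ι x) → x`. Then `φ_N = φ ∘ P_N` does it:
it is `C¹_b` with `Dφ_N(y) = Dφ(P_N y) ∘ P_N`, it only takes values of `φ`, and (ii)–(iv) follow
from the continuity of `φ` and `Dφ` and the boundedness of the convergent sequence `P_N (ι z)`.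
-/

open MeasureTheory Filter

noncomputable section

/-- `E = C([0,1])` with the supremum norm. -/
abbrev E : Type := C(Set.Icc (0:ℝ) 1, ℝ)

/-- `H = L²(0,1)`. -/
abbrev H : Type := Lp ℝ 2 (volume : Measure (Set.Icc (0:ℝ) 1))

/-- The canonical continuous linear embedding `ι : E → H`. -/
def iota : E →L[ℝ] H := ContinuousMap.toLp 2 volume ℝ

/-- `φ ∈ C¹_b(X)`: `φ` is continuously Fréchet differentiable, bounded, with bounded
derivative. -/
def IsC1b {X : Type*} [NormedAddCommGroup X] [NormedSpace ℝ X] (φ : X → ℝ) : Prop :=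
  ContDiff ℝ 1 φ ∧ (∃ C, ∀ x, |φ x| ≤ C) ∧ (∃ C, ∀ x, ‖fderiv ℝ φ x‖ ≤ C)

section CompositionWithLinearMap

open Topology

variable {X Y : Type*} [NormedAddCommGroup X] [NormedSpace ℝ X]
  [NormedAddCommGroup Y] [NormedSpace ℝ Y]

theorem fderiv_comp_continuousLinearMap {G : Type*} [NormedAddCommGroup G] [NormedSpace ℝ G]
    {f : X → G} (P : Y →L[ℝ] X) {y : Y} (hf : DifferentiableAt ℝ f (P y)) :
    fderiv ℝ (f ∘ P) y = (fderiv ℝ f (P y)).comp P := by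
  rw [fderiv_comp y hf P.differentiableAt, P.fderiv]

theorem IsC1b.comp_continuousLinearMap {φ : X → ℝ} (hφ : IsC1b φ) (P : Y →L[ℝ] X) :
    IsC1b (φ ∘ P) := by
  obtain ⟨hφ₁, ⟨C, hC⟩, ⟨C', hC'⟩⟩ := hφ
  refine ⟨hφ₁.comp P.contDiff, ⟨C, fun y => hC (P y)⟩, ⟨C' * ‖P‖, fun y => ?_⟩⟩
  rw [fderiv_comp_continuousLinearMap P (hφ₁.differentiable one_ne_zero _)]
  exact (ContinuousLinearMap.opNorm_comp_le _ _).trans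
    (mul_le_mul_of_nonneg_right (hC' _) (norm_nonneg _))

theorem IsC1b.abs_le_iSup {φ : X → ℝ} (hφ : IsC1b φ) (x : X) : |φ x| ≤ ⨆ x, |φ x| :=
  have ⟨C, hC⟩ := hφ.2.1
  le_ciSup ⟨C, Set.forall_mem_range.2 hC⟩ x

theorem ContDiff.tendsto_fderiv_comp_apply {φ : X → ℝ} (hφ : ContDiff ℝ 1 φ)
    {P : ℕ → Y →L[ℝ] X} {y w : Y} {x z : X} (hy : Tendsto (fun n => P n y) atTop (𝓝 x))
    (hw : Tendsto (fun n => P n w) atTop (𝓝 z)) :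
    Tendsto (fun n => fderiv ℝ (φ ∘ P n) y w) atTop (𝓝 (fderiv ℝ φ x z)) := by
  have hD : Tendsto (fun n => fderiv ℝ φ (P n y)) atTop (𝓝 (fderiv ℝ φ x)) :=
    ((hφ.continuous_fderiv one_ne_zero).tendsto x).comp hy
  simp only [fun n => fderiv_comp_continuousLinearMap (P n) (hφ.differentiable one_ne_zero (P n y)),
    ContinuousLinearMap.comp_apply]
  exact (isBoundedBilinearMap_apply.continuous.tendsto _).comp (hD.prodMk_nhds hw)

theorem IsC1b.exists_bound_fderiv_comp_apply {φ : X → ℝ} (hφ : IsC1b φ)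
    {P : ℕ → Y →L[ℝ] X} {w : Y} {z : X} (hw : Tendsto (fun n => P n w) atTop (𝓝 z)) :
    ∃ C, ∀ n y, |fderiv ℝ (φ ∘ P n) y w| ≤ C := by
  obtain ⟨hφ₁, -, ⟨C, hC⟩⟩ := hφ
  obtain ⟨M, hM⟩ := hw.norm.bddAbove_range
  refine ⟨C * M, fun n y => ?_⟩
  rw [fderiv_comp_continuousLinearMap (P n) (hφ₁.differentiable one_ne_zero _),
    ContinuousLinearMap.comp_apply, ← Real.norm_eq_abs]
  exact (ContinuousLinearMap.le_opNorm _ _).trans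
    (mul_le_mul (hC _) (hM ⟨n, rfl⟩) (norm_nonneg _) ((norm_nonneg _).trans (hC 0)))

end CompositionWithLinearMap

theorem sum_range_max_zero_one_sub_abs {N : ℕ} {s : ℝ} (hs₀ : 0 ≤ s) (hsN : s ≤ N) :
    ∑ k ∈ Finset.range (N + 1), max 0 (1 - |s - k|) = 1 := by
  set j := ⌊s⌋₊
  have hjs : (j : ℝ) ≤ s := Nat.floor_le hs₀
  have hsj : s < j + 1 := Nat.lt_floor_add_one s
  have hjN : j ≤ N := Nat.floor_le_of_le hsN
  have hfar : ∀ k ∈ Finset.range (N + 1), k ≠ j ∧ k ≠ j + 1 → max 0 (1 - |s - k|) = 0 := by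
    rintro k - ⟨hkj, hkj'⟩
    refine max_eq_left (sub_nonpos.2 ?_)
    rcases Nat.lt_or_gt_of_ne hkj with hk | hk
    · have : (k : ℝ) + 1 ≤ j := by exact_mod_cast hk
      exact le_abs.2 (Or.inl (by linarith))
    · have : (j : ℝ) + 2 ≤ k := by exact_mod_cast (show j + 2 ≤ k by omega)
      exact le_abs.2 (Or.inr (by linarith))
  have hj : max 0 (1 - |s - j|) = 1 - (s - j) := by
    rw [abs_of_nonneg (show 0 ≤ s - j by linarith)]; exact max_eq_right (by linarith)
  have hj' : max 0 (1 - |s - (j + 1 : ℕ)|) = s - j := by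
    rw [Nat.cast_succ, abs_of_neg (show s - (j + 1) < 0 by linarith),
      max_eq_right (by linarith)]
    ring
  have hlast : j + 1 ∉ Finset.range (N + 1) → max 0 (1 - |s - (j + 1 : ℕ)|) = 0 := by
    intro h
    have : (N : ℝ) ≤ j := by exact_mod_cast (show N ≤ j by simpa using h)
    rw [hj']; linarith
  rw [Finset.sum_eq_add j (j + 1) (by omega) hfar (fun h => absurd (by simpa using hjN) h) hlast,
    hj, hj']
  ring

section SetAverage

variable {α : Type*} [MeasurableSpace α] {μ : Measure α} {s : Set α}

def setAverageLp (μ : Measure α) (hs : MeasurableSet s) (hμs : μ s ≠ ⊤) : Lp ℝ 2 μ :=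
  indicatorConstLp 2 hs hμs (μ.real s)⁻¹

theorem inner_setAverageLp (hs : MeasurableSet s) (hμs : μ s ≠ ⊤) (f : Lp ℝ 2 μ) :
    inner ℝ (setAverageLp μ hs hμs) f = ⨍ x in s, f x ∂μ := by
  rw [setAverageLp, L2.inner_indicatorConstLp_eq_inner_setIntegral ℝ hs hμs, setAverage_eq,
    Real.inner_apply, smul_eq_mul]

theorem abs_setAverage_sub_le {f : α → ℝ} {c ε : ℝ} (h₀ : μ s ≠ 0) (hμs : μ s ≠ ⊤)
    (hf : IntegrableOn f s μ) (hfc : ∀ᵐ x ∂μ.restrict s, |f x - c| ≤ ε) :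
    |⨍ x in s, f x ∂μ - c| ≤ ε := by
  have := (convex_closedBall c ε).set_average_mem Metric.isClosed_closedBall h₀ hμs hfc hf
  rwa [Metric.mem_closedBall, Real.dist_eq] at this

end SetAverage

namespace PiecewiseLinear

open Set Topology

def hat (N k : ℕ) : E :=
  ⟨fun t => max 0 (1 - |N * (t : ℝ) - k|), by fun_prop⟩

theorem hat_nonneg (N k : ℕ) (t : Icc (0 : ℝ) 1) : 0 ≤ hat N k t := le_max_left _ _

theorem sum_hat (N : ℕ) (t : Icc (0 : ℝ) 1) : ∑ k ∈ Finset.range (N + 1), hat N k t = 1 :=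
  sum_range_max_zero_one_sub_abs (by have := t.2.1; positivity)
    (mul_le_of_le_one_right (Nat.cast_nonneg N) t.2.2)

theorem abs_sub_lt_of_hat_ne_zero {N k : ℕ} (hN : 0 < N) {t : Icc (0 : ℝ) 1}
    (h : hat N k t ≠ 0) : |(t : ℝ) - k / N| < 1 / N := by
  have hN' : (0 : ℝ) < N := by exact_mod_cast hN
  have : |N * (t : ℝ) - k| < 1 := by
    by_contra! hge
    exact h (max_eq_left (by linarith))
  rwa [lt_div_iff₀ hN', ← abs_of_pos hN', ← abs_mul, abs_of_pos hN', sub_mul,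
    div_mul_cancel₀ _ hN'.ne', mul_comm]

def cell (N j : ℕ) : Set (Icc (0 : ℝ) 1) := Subtype.val ⁻¹' Icc (j / N) ((j + 1) / N)

theorem measurableSet_cell (N j : ℕ) : MeasurableSet (cell N j) :=
  measurableSet_Icc.preimage measurable_subtype_coe

theorem volume_cell_ne_zero {N j : ℕ} (hj : j < N) : volume (cell N j) ≠ 0 := by
  have hN : (0 : ℝ) < N := by exact_mod_cast (j.zero_le.trans_lt hj)
  have hsub : Icc ((j : ℝ) / N) ((j + 1) / N) ⊆ Icc 0 1 := by
    refine Icc_subset_Icc (by positivity) ((div_le_one hN).2 ?_)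
    exact_mod_cast hj
  rw [cell, unitInterval.volume_apply, Subtype.image_preimage_coe, inter_eq_right.2 hsub,
    Real.volume_Icc, ne_eq, ENNReal.ofReal_eq_zero, not_le, sub_pos]
  gcongr
  linarith

theorem abs_sub_le_of_mem_cell_pred {N k : ℕ} {u : Icc (0 : ℝ) 1} (hu : u ∈ cell N (k - 1)) :
    |(u : ℝ) - k / N| ≤ 1 / N := by
  obtain ⟨hlo, hhi⟩ := hu
  rcases k with _ | k
  · simp only [Nat.zero_sub, Nat.cast_zero, zero_add, zero_div] at hlo hhi ⊢
    rw [sub_zero, abs_of_nonneg u.2.1]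
    exact hhi
  · simp only [Nat.add_sub_cancel, Nat.cast_succ, add_div] at hlo hhi ⊢
    rw [abs_le]
    constructor <;> linarith

def cellAverage (N j : ℕ) : H := setAverageLp volume (measurableSet_cell N j) (measure_ne_top _ _)

theorem abs_inner_cellAverage_iota_sub_le {N j : ℕ} (hj : j < N) {x : E} {c ε : ℝ}
    (hx : ∀ u ∈ cell N j, |x u - c| ≤ ε) :
    |inner ℝ (cellAverage N j) (iota x) - c| ≤ ε := by
  rw [cellAverage, inner_setAverageLp]
  refine abs_setAverage_sub_le (volume_cell_ne_zero hj) (measure_ne_top _ _)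
    (integrableOn_Lp_of_measure_ne_top _ fact_one_le_two_ennreal.elim (measure_ne_top _ _)) ?_
  filter_upwards [ae_restrict_of_ae (ContinuousMap.coeFn_toLp (p := 2) (μ := volume) (𝕜 := ℝ) x),
    ae_restrict_mem (measurableSet_cell N j)] with u hu hmem
  rw [iota, hu]
  exact hx u hmem

/-- The node `k / N` is paired with the cell to its left, `[(k - 1) / N, k / N]`; the node `0`
with `[0, 1 / N]`, since `0 - 1 = 0` in `ℕ`. -/
def interpolant (N : ℕ) : H →L[ℝ] E :=
  ∑ k ∈ Finset.range (N + 1), (innerSL ℝ (cellAverage N (k - 1))).smulRight (hat N k)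

theorem interpolant_apply (N : ℕ) (y : H) (t : Icc (0 : ℝ) 1) :
    interpolant N y t =
      ∑ k ∈ Finset.range (N + 1), inner ℝ (cellAverage N (k - 1)) y * hat N k t := by
  simp only [interpolant, _root_.sum_apply, ContinuousMap.coe_sum, Finset.sum_apply,
    ContinuousLinearMap.smulRight_apply, ContinuousMap.smul_apply, innerSL_apply_apply, smul_eq_mul]

theorem abs_interpolant_iota_sub_le {N : ℕ} (hN : 0 < N) {x : E} {ε : ℝ}
    (hx : ∀ u v : Icc (0 : ℝ) 1, dist u v < 2 / N → dist (x u) (x v) ≤ ε)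
    (t : Icc (0 : ℝ) 1) : |interpolant N (iota x) t - x t| ≤ ε := by
  have hterm : ∀ k ∈ Finset.range (N + 1),
      |(inner ℝ (cellAverage N (k - 1)) (iota x) - x t) * hat N k t| ≤ ε * hat N k t := by
    intro k hk
    rw [abs_mul, abs_of_nonneg (hat_nonneg N k t)]
    rcases eq_or_ne (hat N k t) 0 with h0 | h0
    · simp [h0]
    refine mul_le_mul_of_nonneg_right (abs_inner_cellAverage_iota_sub_le
      (by simp only [Finset.mem_range] at hk; omega) fun u hu => ?_) (hat_nonneg N k t)
    rw [← Real.dist_eq]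
    refine hx u t ?_
    have hu' := abs_sub_le_of_mem_cell_pred hu
    have ht' := abs_sub_lt_of_hat_ne_zero hN h0
    rw [Subtype.dist_eq, Real.dist_eq]
    calc |(u : ℝ) - t| ≤ |(u : ℝ) - k / N| + |(k / N : ℝ) - t| := abs_sub_le _ _ _
      _ < 1 / N + 1 / N := by rw [abs_sub_comm (k / N : ℝ)]; linarith
      _ = 2 / N := by ring
  calc |interpolant N (iota x) t - x t|
      = |∑ k ∈ Finset.range (N + 1),
          (inner ℝ (cellAverage N (k - 1)) (iota x) - x t) * hat N k t| := by
        simp only [interpolant_apply, sub_mul, Finset.sum_sub_distrib, ← Finset.mul_sum, sum_hat,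
          mul_one]
    _ ≤ ∑ k ∈ Finset.range (N + 1), ε * hat N k t :=
        (Finset.abs_sum_le_sum_abs _ _).trans (Finset.sum_le_sum hterm)
    _ = ε := by rw [← Finset.mul_sum, sum_hat, mul_one]

theorem tendsto_interpolant_iota (x : E) :
    Tendsto (fun N => interpolant N (iota x)) atTop (𝓝 x) := by
  rw [Metric.tendsto_nhds]
  intro ε hε
  obtain ⟨δ, hδ, hxδ⟩ := Metric.uniformContinuous_iff.1
    (CompactSpace.uniformContinuous_of_continuous x.continuous) (ε / 2) (half_pos hε)
  filter_upwards [eventually_gt_atTop 0,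
    (tendsto_const_div_atTop_nhds_zero_nat 2).eventually (gt_mem_nhds hδ)] with N hN hNδ
  rw [dist_eq_norm]
  refine lt_of_le_of_lt ((ContinuousMap.norm_le_of_nonempty _).2 fun t => ?_) (half_lt_self hε)
  exact abs_interpolant_iota_sub_le hN (fun u v huv => (hxδ (huv.trans hNδ)).le) t

end PiecewiseLinear

/-- Every `φ ∈ C¹_b(E)` can be approximated by a sequence `(φ_n) ⊆ C¹_b(H)`
pointwise along `ι`, together with its directional derivatives, with uniform bounds. -/
theorem exists_C1b_approximation_on_H (φ : E → ℝ) (hφ : IsC1b φ) :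
    ∃ φn : ℕ → H → ℝ, (∀ n, IsC1b (φn n)) ∧
      (∀ n y, |φn n y| ≤ ⨆ x : E, |φ x|) ∧
      (∀ x : E, Tendsto (fun n => φn n (iota x)) atTop (nhds (φ x))) ∧
      (∀ x z : E,
        Tendsto (fun n => fderiv ℝ (φn n) (iota x) (iota z)) atTop (nhds (fderiv ℝ φ x z))) ∧
      (∀ z : E, ∃ C : ℝ, ∀ n y, |fderiv ℝ (φn n) y (iota z)| ≤ C) := by
  have hP := PiecewiseLinear.tendsto_interpolant_iota
  exact ⟨fun N => φ ∘ PiecewiseLinear.interpolant N, fun _ => hφ.comp_continuousLinearMap _,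
    fun _ _ => hφ.abs_le_iSup _,
    fun x => (hφ.1.continuous.tendsto x).comp (hP x),
    fun x z => hφ.1.tendsto_fderiv_comp_apply (hP x) (hP z),
    fun z => hφ.exists_bound_fderiv_comp_apply (hP z)⟩
end
end

section
/- Let H = L²(0,1), let E = C([0,1]) with the supremum norm, and let ι : E → H be the canonical continuous linear embedding. Let μ be a Borel probability measure on E and let ι_*μ denote its pushforward to H. Let z ∈ E and suppose w ∈ L¹(H, ι_*μ) satisfies ∫_H ⟨Dψ(y), ι z⟩_H (ι_*μ)(dy) = ∫_H ψ(y) w(y) (ι_*μ)(dy) for every ψ ∈ C¹_b(H). Then for all φ, ψ ∈ C¹_b(E): ∫_E Dφ(x)(z) ψ(x) μ(dx) = − ∫_E Dψ(x)(z) φ(x) μ(dx) + ∫_E φ(x) ψ(x) w(ι x) μ(dx). -/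
open MeasureTheory Filter

noncomputable section

instance : MeasurableSpace E := borel E
instance : BorelSpace E := ⟨rfl⟩
instance : MeasurableSpace H := borel H
instance : BorelSpace H := ⟨rfl⟩

/-!
For tent kernels `k_{n,t}` of width `1 / (n + 2)` centred near `t`, the operators
`S_n f (t) = ⟪ι k_{n,t}, f⟫` map `H` continuously into `E`, and `S_n (ι x) → x` uniformly since
`(k_{n,t})` is an approximate identity. For `F ∈ C¹_b(E)` the function `F ∘ S_n` is in `C¹_b(H)`,
so the weight identity applies to it; pulled back along `ι` it reads
`∫ DF(S_n ι x)(S_n ι z) dμ = ∫ F(S_n ι x) w(ι x) dμ`, and dominated convergence turns this into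
`∫ DF(x) z dμ = ∫ F(x) w(ι x) dμ`. The theorem is this identity for `F = φ ψ`, by the product rule.
-/

open Topology Set

namespace IsC1b

variable {X Y : Type*} [NormedAddCommGroup X] [NormedSpace ℝ X] [NormedAddCommGroup Y]
  [NormedSpace ℝ Y] {φ ψ : X → ℝ}

lemma continuous (hφ : IsC1b φ) : Continuous φ := hφ.1.continuous

lemma continuous_fderiv (hφ : IsC1b φ) : Continuous (fderiv ℝ φ) :=
  hφ.1.continuous_fderiv one_ne_zero

lemma differentiable (hφ : IsC1b φ) : Differentiable ℝ φ := hφ.1.differentiable one_ne_zero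

lemma fderiv_comp_continuousLinearMap (hφ : IsC1b φ) (L : Y →L[ℝ] X) (y : Y) :
    fderiv ℝ (φ ∘ L) y = (fderiv ℝ φ (L y)).comp L := by
  rw [fderiv_comp y (hφ.differentiable _) L.differentiableAt, L.fderiv]

lemma comp_continuousLinearMap_s5 (hφ : IsC1b φ) (L : Y →L[ℝ] X) : IsC1b (φ ∘ L) := by
  obtain ⟨C, hC⟩ := hφ.2.1
  obtain ⟨C', hC'⟩ := hφ.2.2
  refine ⟨hφ.1.comp L.contDiff, ⟨C, fun y => hC (L y)⟩, ⟨C' * ‖L‖, fun y => ?_⟩⟩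
  rw [hφ.fderiv_comp_continuousLinearMap]
  exact (ContinuousLinearMap.opNorm_comp_le _ _).trans (by gcongr; exact hC' _)

lemma mul (hφ : IsC1b φ) (hψ : IsC1b ψ) : IsC1b (φ * ψ) := by
  obtain ⟨hφ1, ⟨C, hC⟩, ⟨C', hC'⟩⟩ := hφ
  obtain ⟨hψ1, ⟨D, hD⟩, ⟨D', hD'⟩⟩ := hψ
  have hC0 : 0 ≤ C := (abs_nonneg (φ 0)).trans (hC 0)
  have hD0 : 0 ≤ D := (abs_nonneg (ψ 0)).trans (hD 0)
  refine ⟨hφ1.mul hψ1, ⟨C * D, fun x => ?_⟩, ⟨C * D' + D * C', fun x => ?_⟩⟩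
  · rw [Pi.mul_apply, abs_mul]
    exact mul_le_mul (hC x) (hD x) (abs_nonneg _) hC0
  · rw [fderiv_mul (hφ1.differentiable one_ne_zero x) (hψ1.differentiable one_ne_zero x)]
    calc ‖φ x • fderiv ℝ ψ x + ψ x • fderiv ℝ φ x‖
        ≤ |φ x| * ‖fderiv ℝ ψ x‖ + |ψ x| * ‖fderiv ℝ φ x‖ := by
          simpa only [norm_smul, Real.norm_eq_abs] using
            norm_add_le (φ x • fderiv ℝ ψ x) (ψ x • fderiv ℝ φ x)
      _ ≤ C * D' + D * C' := by
          gcongr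
          exacts [hC x, hD' x, hD x, hC' x]

lemma integrable_fderiv_apply_mul [MeasurableSpace X] [OpensMeasurableSpace X]
    {μ : Measure X} [IsFiniteMeasure μ] (hφ : IsC1b φ) (hψ : IsC1b ψ) (z : X) :
    Integrable (fun x => fderiv ℝ φ x z * ψ x) μ := by
  obtain ⟨C, hC⟩ := hφ.2.2
  obtain ⟨D, hD⟩ := hψ.2.1
  have hφz : ∀ x, |fderiv ℝ φ x z| ≤ C * ‖z‖ := fun x =>
    (fderiv ℝ φ x).le_opNorm z |>.trans (by gcongr; exact hC x)
  refine Integrable.of_bound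
    (((hφ.continuous_fderiv.clm_apply continuous_const).mul hψ.continuous).aestronglyMeasurable)
    (C * ‖z‖ * D) (ae_of_all _ fun x => ?_)
  rw [Real.norm_eq_abs, abs_mul]
  exact mul_le_mul (hφz x) (hD x) (abs_nonneg _) ((abs_nonneg _).trans (hφz x))

end IsC1b

def IsIntegrationByPartsWeight {Y : Type*} [NormedAddCommGroup Y] [NormedSpace ℝ Y]
    [MeasurableSpace Y] (ν : Measure Y) (h : Y) (w : Y → ℝ) : Prop :=
  ∀ ψ : Y → ℝ, IsC1b ψ → ∫ y, fderiv ℝ ψ y h ∂ν = ∫ y, ψ y * w y ∂ν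

section Transfer

variable {X Y : Type*} [NormedAddCommGroup X] [NormedSpace ℝ X] [MeasurableSpace X]
  [OpensMeasurableSpace X] [NormedAddCommGroup Y] [NormedSpace ℝ Y] [MeasurableSpace Y]
  [BorelSpace Y] {μ : Measure X} {ι : X →L[ℝ] Y} {z : X} {w : Y → ℝ}

lemma integral_fderiv_comp_apply_eq (hw : Integrable w (μ.map ι))
    (hweight : IsIntegrationByPartsWeight (μ.map ι) (ι z) w)
    {F : X → ℝ} (hF : IsC1b F) (L : Y →L[ℝ] X) :
    ∫ x, fderiv ℝ F (L (ι x)) (L (ι z)) ∂μ = ∫ x, F (L (ι x)) * w (ι x) ∂μ := by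
  have hι : AEMeasurable ι μ := ι.continuous.measurable.aemeasurable
  have h := hweight (F ∘ L) (hF.comp_continuousLinearMap_s5 L)
  simp only [hF.fderiv_comp_continuousLinearMap, ContinuousLinearMap.comp_apply,
    Function.comp_apply] at h
  rwa [integral_map hι, integral_map hι] at h
  · exact (hF.continuous.comp L.continuous).aestronglyMeasurable.mul hw.aestronglyMeasurable
  · exact ((hF.continuous_fderiv.comp L.continuous).clm_apply
      continuous_const).aestronglyMeasurable

theorem integral_fderiv_apply_eq_of_tendsto [IsFiniteMeasure μ] (S : ℕ → Y →L[ℝ] X)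
    (hS : ∀ x, Tendsto (fun n => S n (ι x)) atTop (𝓝 x)) (hw : Integrable w (μ.map ι))
    (hweight : IsIntegrationByPartsWeight (μ.map ι) (ι z) w)
    {F : X → ℝ} (hF : IsC1b F) :
    ∫ x, fderiv ℝ F x z ∂μ = ∫ x, F x * w (ι x) ∂μ := by
  have hwι : Integrable (fun x => w (ι x)) μ :=
    (integrable_map_measure hw.aestronglyMeasurable ι.continuous.measurable.aemeasurable).mp hw
  obtain ⟨C, hC⟩ := hF.2.1
  obtain ⟨C', hC'⟩ := hF.2.2
  obtain ⟨B, hB⟩ := (hS z).norm.bddAbove_range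
  have hlhs : Tendsto (fun n => ∫ x, fderiv ℝ F (S n (ι x)) (S n (ι z)) ∂μ) atTop
      (𝓝 (∫ x, fderiv ℝ F x z ∂μ)) := by
    refine tendsto_integral_of_dominated_convergence (fun _ => C' * B)
      (fun n => ((hF.continuous_fderiv.comp ((S n).continuous.comp ι.continuous)).clm_apply
        continuous_const).aestronglyMeasurable) (integrable_const _)
      (fun n => ae_of_all _ fun x => ?_) (ae_of_all _ fun x => ?_)
    · exact (ContinuousLinearMap.le_opNorm _ _).trans
        (mul_le_mul (hC' _) (hB ⟨n, rfl⟩) (norm_nonneg _) ((norm_nonneg _).trans (hC' x)))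
    · exact (isBoundedBilinearMap_apply.continuous.tendsto _).comp
        (((hF.continuous_fderiv.tendsto x).comp (hS x)).prodMk_nhds (hS z))
  have hrhs : Tendsto (fun n => ∫ x, F (S n (ι x)) * w (ι x) ∂μ) atTop
      (𝓝 (∫ x, F x * w (ι x) ∂μ)) := by
    refine tendsto_integral_of_dominated_convergence (fun x => C * |w (ι x)|)
      (fun n => (hF.continuous.comp ((S n).continuous.comp ι.continuous)).aestronglyMeasurable.mul
        hwι.aestronglyMeasurable) (hwι.abs.const_mul C)
      (fun n => ae_of_all _ fun x => ?_)
      (ae_of_all _ fun x => ((hF.continuous.tendsto x).comp (hS x)).mul_const _)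
    rw [Real.norm_eq_abs, abs_mul]
    exact mul_le_mul_of_nonneg_right (hC _) (abs_nonneg _)
  exact tendsto_nhds_unique (hlhs.congr fun n => integral_fderiv_comp_apply_eq hw hweight hF (S n))
    hrhs

end Transfer

open scoped RealInnerProductSpace

section InnerAgainst

variable {T V : Type*} [TopologicalSpace T] [CompactSpace T] [NormedAddCommGroup V]
  [InnerProductSpace ℝ V]

def innerAgainst (K : C(T, V)) : V →L[ℝ] C(T, ℝ) :=
  LinearMap.mkContinuous
    { toFun := fun f => ⟨fun t => ⟪K t, f⟫, K.continuous.inner continuous_const⟩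
      map_add' := fun f g => by ext t; simp [inner_add_right]
      map_smul' := fun c f => by ext t; simp [inner_smul_right] }
    ‖K‖ fun f => (ContinuousMap.norm_le _ (by positivity)).mpr fun t =>
      (norm_inner_le_norm _ _).trans (by gcongr; exact K.norm_coe_le_norm t)

@[simp]
lemma innerAgainst_apply (K : C(T, V)) (f : V) (t : T) : innerAgainst K f t = ⟪K t, f⟫ := rfl

end InnerAgainst

theorem tendstoUniformly_integral_mul_of_approxIdentity {T : Type*} [MetricSpace T]
    [CompactSpace T] [MeasurableSpace T] [OpensMeasurableSpace T] {μ : Measure T}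
    [IsFiniteMeasure μ] {k : ℕ → T → T → ℝ} {δ : ℕ → ℝ} (hk : ∀ n t, Continuous (k n t))
    (hk0 : ∀ n t s, 0 ≤ k n t s) (hk1 : ∀ n t, ∫ s, k n t s ∂μ = 1)
    (hsupp : ∀ n t s, k n t s ≠ 0 → dist s t ≤ δ n) (hδ : Tendsto δ atTop (𝓝 0))
    (x : C(T, ℝ)) : TendstoUniformly (fun n t => ∫ s, k n t s * x s ∂μ) x atTop := by
  rw [Metric.tendstoUniformly_iff]
  intro ε hε
  obtain ⟨η, hη, hx⟩ := Metric.uniformContinuous_iff.mp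
    (CompactSpace.uniformContinuous_of_continuous x.continuous) (ε / 2) (half_pos hε)
  filter_upwards [hδ.eventually (gt_mem_nhds hη)] with n hn t
  have hint : ∀ g : T → ℝ, Continuous g → Integrable (fun s => k n t s * g s) μ := fun g hg =>
    ((hk n t).mul hg).integrable_of_hasCompactSupport (HasCompactSupport.of_compactSpace _)
  have hbound : ∀ s, ‖k n t s * (x s - x t)‖ ≤ k n t s * (ε / 2) := fun s => by
    rw [norm_mul, Real.norm_of_nonneg (hk0 n t s)]
    by_cases hks : k n t s = 0
    · simp [hks]
    · exact mul_le_mul_of_nonneg_left (hx ((hsupp n t s hks).trans_lt hn)).le (hk0 n t s)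
  calc dist (x t) (∫ s, k n t s * x s ∂μ)
      = ‖∫ s, k n t s * (x s - x t) ∂μ‖ := by
        simp_rw [mul_sub]
        rw [integral_sub (hint _ x.continuous) (hint _ continuous_const), integral_mul_const,
          hk1, one_mul, dist_comm, dist_eq_norm]
    _ ≤ ∫ s, k n t s * (ε / 2) ∂μ :=
        norm_integral_le_of_norm_le (hint _ continuous_const) (ae_of_all _ hbound)
    _ = ε / 2 := by rw [integral_mul_const, hk1, one_mul]
    _ < ε := half_lt_self hε

def tent (N c s : ℝ) : ℝ := N * max 0 (1 - N * |s - c|)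

lemma tent_nonneg {N : ℝ} (hN : 0 ≤ N) (c s : ℝ) : 0 ≤ tent N c s :=
  mul_nonneg hN (le_max_left _ _)

lemma mul_abs_sub_lt_of_tent_ne_zero {N c s : ℝ} (h : tent N c s ≠ 0) : N * |s - c| < 1 := by
  by_contra! hle
  exact h (by simp [tent, sub_nonpos.mpr hle])

lemma integral_max_zero_one_sub_abs : ∫ u : ℝ, max 0 (1 - |u|) = 1 := by
  rw [integral_comp_abs (f := fun u => max 0 (1 - u)),
    setIntegral_eq_of_subset_of_forall_sdiff_eq_zero measurableSet_Ioi Ioc_subset_Ioi_self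
      (fun u hu => max_eq_left ?_),
    ← intervalIntegral.integral_of_le zero_le_one,
    intervalIntegral.integral_congr (g := fun u => 1 - u)
      (fun u hu => max_eq_right (by rw [uIcc_of_le zero_le_one] at hu; linarith [hu.2]))]
  · rw [intervalIntegral.integral_sub intervalIntegrable_const
      intervalIntegral.intervalIntegrable_id, integral_id]
    norm_num
  · simp only [Set.mem_sdiff, mem_Ioi, mem_Ioc, not_and, not_le] at hu
    linarith [hu.2 hu.1]

lemma integral_tent {N : ℝ} (hN : 0 < N) (c : ℝ) : ∫ s, tent N c s = 1 := by
  have h := Measure.integral_comp_mul_left (fun u => max 0 (1 - |u|)) N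
  simp only [abs_mul, abs_of_pos hN, integral_max_zero_one_sub_abs, abs_inv, smul_eq_mul,
    mul_one] at h
  simp only [tent, integral_const_mul]
  rw [integral_sub_right_eq_self (fun s => max 0 (1 - N * |s|)) c, h, mul_inv_cancel₀ hN.ne']

/-- The centre `(1 + n t) / (n + 2)` keeps the support `[n t, n t + 2] / (n + 2)` inside
`[0, 1]` for `t ∈ [0, 1]`. -/
def tentKernel (n : ℕ) (t s : ℝ) : ℝ := tent (n + 2) ((1 + n * t) / (n + 2)) s

lemma continuous_tentKernel (n : ℕ) : Continuous fun p : ℝ × ℝ => tentKernel n p.1 p.2 := by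
  unfold tentKernel tent
  fun_prop

lemma abs_sub_lt_of_tentKernel_ne_zero {n : ℕ} {t s : ℝ} (h : tentKernel n t s ≠ 0) :
    |s - (1 + n * t) / (n + 2)| < 1 / (n + 2) := by
  rw [lt_div_iff₀ (by positivity), mul_comm]
  exact mul_abs_sub_lt_of_tent_ne_zero h

lemma mem_Icc_of_tentKernel_ne_zero {n : ℕ} {t s : ℝ} (ht : t ∈ Icc (0 : ℝ) 1)
    (h : tentKernel n t s ≠ 0) : s ∈ Icc (0 : ℝ) 1 := by
  have hs := abs_lt.mp (abs_sub_lt_of_tentKernel_ne_zero h)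
  have hn : (0 : ℝ) < n + 2 := by positivity
  have hnt : n * t ≤ n := mul_le_of_le_one_right n.cast_nonneg ht.2
  constructor
  · have : 0 ≤ (n * t) / (n + 2) := div_nonneg (mul_nonneg n.cast_nonneg ht.1) hn.le
    have : (1 + n * t) / (n + 2) - 1 / (n + 2) = n * t / (n + 2) := by ring
    linarith
  · have : (1 + n * t) / (n + 2) + 1 / (n + 2) ≤ 1 := by
      rw [← add_div, div_le_one hn]; linarith
    linarith

lemma abs_sub_le_of_tentKernel_ne_zero {n : ℕ} {t s : ℝ} (ht : t ∈ Icc (0 : ℝ) 1)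
    (h : tentKernel n t s ≠ 0) : |s - t| ≤ 2 / (n + 2) := by
  have hn : (0 : ℝ) < n + 2 := by positivity
  have hc : |(1 + n * t) / (n + 2) - t| ≤ 1 / (n + 2) := by
    rw [show (1 + n * t) / (n + 2) - t = (1 - 2 * t) / (n + 2) by field_simp; ring, abs_div,
      abs_of_pos hn]
    gcongr
    exact abs_le.mpr ⟨by linarith [ht.2], by linarith [ht.1]⟩
  calc |s - t| ≤ |s - (1 + n * t) / (n + 2)| + |(1 + n * t) / (n + 2) - t| := abs_sub_le _ _ _
    _ ≤ 1 / (n + 2) + 1 / (n + 2) := add_le_add (abs_sub_lt_of_tentKernel_ne_zero h).le hc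
    _ = 2 / (n + 2) := by ring

lemma integral_tentKernel (n : ℕ) {t : ℝ} (ht : t ∈ Icc (0 : ℝ) 1) :
    ∫ s : Icc (0 : ℝ) 1, tentKernel n t s = 1 := by
  rw [integral_subtype measurableSet_Icc (tentKernel n t),
    setIntegral_eq_integral_of_forall_compl_eq_zero fun s hs =>
      not_not.mp (mt (mem_Icc_of_tentKernel_ne_zero ht) hs)]
  exact integral_tent (by positivity) _

lemma inner_iota_iota (f g : E) : ⟪iota f, iota g⟫ = ∫ s, f s * g s := by
  rw [MeasureTheory.L2.inner_def]
  refine integral_congr_ae ?_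
  filter_upwards [ContinuousMap.coeFn_toLp (p := 2) (𝕜 := ℝ) volume f,
    ContinuousMap.coeFn_toLp (p := 2) (𝕜 := ℝ) volume g] with s hf hg
  simp only [iota, hf, hg, RCLike.inner_apply, conj_trivial, mul_comm]

def mollifier (n : ℕ) : H →L[ℝ] E :=
  innerAgainst (ContinuousMap.comp ⟨iota, iota.continuous⟩
    (ContinuousMap.curry ⟨fun p : Icc (0 : ℝ) 1 × Icc (0 : ℝ) 1 => tentKernel n p.1 p.2,
      (continuous_tentKernel n).comp (continuous_subtype_val.prodMap continuous_subtype_val)⟩))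

lemma mollifier_iota_apply (n : ℕ) (x : E) (t : Icc (0 : ℝ) 1) :
    mollifier n (iota x) t = ∫ s : Icc (0 : ℝ) 1, tentKernel n t s * x s := by
  rw [mollifier, innerAgainst_apply, ContinuousMap.comp_apply]
  exact inner_iota_iota _ x

lemma tendsto_mollifier_iota (x : E) : Tendsto (fun n => mollifier n (iota x)) atTop (𝓝 x) := by
  rw [ContinuousMap.tendsto_iff_tendstoUniformly]
  simp only [mollifier_iota_apply]
  refine tendstoUniformly_integral_mul_of_approxIdentity
    (k := fun n (t s : Icc (0 : ℝ) 1) => tentKernel n t s) (δ := fun n : ℕ => 2 / ((n : ℝ) + 2))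
    (fun n t => (continuous_tentKernel n).comp (continuous_const.prodMk continuous_subtype_val))
    (fun n t s => tent_nonneg (by positivity) _ _) (fun n t => integral_tentKernel n t.2)
    (fun n t s h => abs_sub_le_of_tentKernel_ne_zero t.2 h) ?_ x
  exact tendsto_const_nhds.div_atTop (tendsto_natCast_atTop_atTop.atTop_add tendsto_const_nhds)

/-- If `w ∈ L¹(H, ι_*μ)` is an integration-by-parts weight for `(ι_*μ, ι z)`
on `H`, then the symmetric integration-by-parts formula holds on `E`:
`∫ Dφ·z ψ dμ = −∫ Dψ·z φ dμ + ∫ φ ψ w(ι·) dμ` for all `φ, ψ ∈ C¹_b(E)`. -/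
theorem integration_by_parts_symmetric
    (μ : Measure E) [IsProbabilityMeasure μ] (z : E) (w : H → ℝ)
    (hw : Integrable w (μ.map iota))
    (hweight : ∀ ψ : H → ℝ, IsC1b ψ →
      ∫ y, fderiv ℝ ψ y (iota z) ∂(μ.map iota) = ∫ y, ψ y * w y ∂(μ.map iota))
    (φ ψ : E → ℝ) (hφ : IsC1b φ) (hψ : IsC1b ψ) :
    ∫ x, fderiv ℝ φ x z * ψ x ∂μ
      = - ∫ x, fderiv ℝ ψ x z * φ x ∂μ + ∫ x, φ x * ψ x * w (iota x) ∂μ := by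
  have h := integral_fderiv_apply_eq_of_tendsto mollifier tendsto_mollifier_iota hw hweight
    (hφ.mul hψ)
  have hprod : ∀ x, fderiv ℝ (φ * ψ) x z = fderiv ℝ φ x z * ψ x + fderiv ℝ ψ x z * φ x :=
    fun x => by
      rw [fderiv_mul (hφ.differentiable x) (hψ.differentiable x)]
      simp only [add_apply, FunLike.coe_smul, Pi.smul_apply, smul_eq_mul]
      ring
  simp only [hprod, Pi.mul_apply] at h
  rw [integral_add (hφ.integrable_fderiv_apply_mul hψ z)
    (hψ.integrable_fderiv_apply_mul hφ z)] at h
  linarith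
end
end

section
/- Let B = (B_t)_{t∈[0,1]} be a standard Brownian motion on [0,1]. Then almost surely the path t ↦ B_t attains its minimum over [0,1] at a unique point, i.e. P( ∃ s, t ∈ [0,1] with s ≠ t and B_s = B_t = min_{u∈[0,1]} B_u ) = 0. -/
/-!
If `s < t` are two minimisers, choose rationals `s < p < q < t`: the minimum of `B` over `[0, p]`
then equals its minimum over `[q, 1]`, and by continuity both are infima over rational times,
hence random variables. So it suffices that, for fixed `p < q`, the event
`min_{[0,p]} B - B_q = min_{[q,1]} (B - B_q)` is null. The right side is a function of the
increments after `q` and the left side of the path up to `q`, so the two are independent; and the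
left side has no atoms, being the sum of `min_{[0,p]} B - B_p` and the independent nondegenerate
Gaussian `B_p - B_q`.
-/

open MeasureTheory ProbabilityTheory

/-- A standard Brownian motion on the time set `S ⊆ [0,∞)` (with `0 ∈ S`): `B₀ = 0`,
almost surely continuous paths on `S`, independent increments, and Gaussian increments
`B_t − B_s ∼ N(0, t−s)` for `s ≤ t` in `S`. -/
def IsStandardBM {Ω : Type*} [MeasurableSpace Ω] (P : Measure Ω) (B : ℝ → Ω → ℝ)
    (S : Set ℝ) : Prop :=
  (∀ t, Measurable (B t)) ∧
  (∀ᵐ ω ∂P, B 0 ω = 0) ∧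
  (∀ᵐ ω ∂P, ContinuousOn (fun t => B t ω) S) ∧
  (∀ (n : ℕ) (t : Fin (n + 1) → ℝ), Monotone t → (∀ i, t i ∈ S) →
    iIndepFun
      (fun (i : Fin n) => fun ω => B (t i.succ) ω - B (t i.castSucc) ω) P) ∧
  (∀ s t : ℝ, s ∈ S → t ∈ S → s ≤ t →
    Measure.map (fun ω => B t ω - B s ω) P = gaussianReal 0 (Real.toNNReal (t - s)))

open Set

theorem Finset.exists_monotone_enum {T : Type*} [LinearOrder T] (F : Finset T)
    (hF : F.Nonempty) :
    ∃ (τ : ℕ → T) (idx : F → ℕ), Monotone τ ∧ Monotone idx ∧ ∀ r, τ (idx r) = r := by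
  have hN : 0 < F.card := Finset.card_pos.2 hF
  set e := F.orderIsoOfFin rfl
  refine ⟨fun m => e ⟨min m (F.card - 1), by omega⟩, fun r => e.symm r,
    fun m m' h => Subtype.mono_coe _ (e.monotone (min_le_min_right _ h)),
    fun r r' h => e.symm.monotone h, fun r => ?_⟩
  simp only [min_eq_left (Nat.le_sub_one_of_lt (e.symm r).2), Fin.eta, e.apply_symm_apply]

theorem iInf_eq_of_isMinOn_of_subset_closure {α β ι : Type*} [TopologicalSpace α]
    [ConditionallyCompleteLinearOrder β] [TopologicalSpace β] [OrderTopology β]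
    {g : α → β} {f : ι → α} {K : Set α} {s : α} (hg : ContinuousOn g K) (hfK : ∀ i, f i ∈ K)
    (hK : K ⊆ closure (range f)) (hs : s ∈ K) (hmin : IsMinOn g K s) :
    ⨅ i, g (f i) = g s := by
  have : Nonempty ι := range_nonempty_iff_nonempty.1 (closure_nonempty_iff.1 ⟨s, hK hs⟩)
  refine IsGLB.ciInf_eq (isGLB_of_mem_closure ?_ ?_)
  · rintro _ ⟨i, rfl⟩
    exact hmin (hfK i)
  · rw [range_comp']
    exact ((hg s hs).mono (range_subset_iff.2 hfK)).mem_closure_image (hK hs)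

theorem Icc_subset_closure_range_rat {x y : ℝ} (hxy : x < y) :
    Icc x y ⊆ closure (range fun r : {r : ℚ // (r : ℝ) ∈ Icc x y} => (r : ℝ)) := by
  refine (closure_Ioo hxy.ne).superset.trans <| (closure_mono
    (Rat.denseRange_cast.open_subset_closure_inter isOpen_Ioo)).trans ?_
  rw [closure_closure]
  refine closure_mono ?_
  rintro _ ⟨hr, r, rfl⟩
  exact ⟨⟨r, Ioo_subset_Icc_self hr⟩, rfl⟩

theorem exists_rat_iInf_sub_eq_of_isMinOn {g : ℝ → ℝ} {x y s t : ℝ}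
    (hg : ContinuousOn g (Icc x y)) (hs : s ∈ Icc x y) (ht : t ∈ Icc x y) (hst : s ≠ t)
    (hmin : IsMinOn g (Icc x y) s) (heq : g s = g t) :
    ∃ p q : ℚ, x < p ∧ (p : ℝ) < q ∧ (q : ℝ) < y ∧
      (⨅ r : {r : ℚ // (r : ℝ) ∈ Icc x p}, g r) - g q =
        ⨅ r : {r : ℚ // (r : ℝ) ∈ Icc (q : ℝ) y}, (g r - g q) := by
  wlog hlt : s < t generalizing s t
  · exact this ht hs hst.symm (isMinOn_iff.2 fun u hu => heq ▸ hmin hu) heq.symm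
      (lt_of_le_of_ne (not_lt.1 hlt) hst.symm)
  obtain ⟨p, hsp, hpt⟩ := exists_rat_btwn hlt
  obtain ⟨q, hpq, hqt⟩ := exists_rat_btwn hpt
  have hxp : x < p := hs.1.trans_lt hsp
  have hqy : (q : ℝ) < y := hqt.trans_le ht.2
  have hleft : Icc x (p : ℝ) ⊆ Icc x y := Icc_subset_Icc_right (hpq.trans hqy).le
  have hright : Icc (q : ℝ) y ⊆ Icc x y := Icc_subset_Icc_left (hxp.trans hpq).le
  refine ⟨p, q, hxp, hpq, hqy, ?_⟩
  rw [iInf_eq_of_isMinOn_of_subset_closure (hg.mono hleft) (fun r => r.2)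
      (Icc_subset_closure_range_rat hxp) ⟨hs.1, hsp.le⟩ (hmin.on_subset hleft),
    iInf_eq_of_isMinOn_of_subset_closure (g := fun u => g u - g q)
      ((hg.mono hright).sub continuousOn_const) (fun r => r.2)
      (Icc_subset_closure_range_rat hqy) ⟨hqt.le, ht.2⟩
      (fun u hu => sub_le_sub_right (heq ▸ hmin (hright hu)) _), heq]

theorem measurable_sub_of_measurable_increments {Ω E : Type*} [MeasurableSpace E] [AddGroup E]
    [MeasurableAdd₂ E] {m : MeasurableSpace Ω} {x : ℕ → Ω → E} {i j : ℕ} (hij : i ≤ j)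
    (h : ∀ l, i ≤ l → l < j → Measurable[m] fun ω => x (l + 1) ω - x l ω) :
    Measurable[m] fun ω => x j ω - x i ω := by
  induction j, hij using Nat.le_induction with
  | base => simp only [sub_self]; exact measurable_const
  | succ j hij ih =>
    simpa only [sub_add_sub_cancel] using
      (h j hij j.lt_succ_self).fun_add (ih fun l hl hlj => h l hl (hlj.trans j.lt_succ_self))

namespace ProbabilityTheory

variable {Ω T E : Type*} {mΩ : MeasurableSpace Ω} {P : Measure Ω}

theorem HasIndepIncrements.comp_monotone {T' : Type*} [Preorder T] [Preorder T']
    [MeasurableSpace E] [Sub E] {X : T → Ω → E} {f : T' → T}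
    (hX : HasIndepIncrements X P) (hf : Monotone f) :
    HasIndepIncrements (fun t => X (f t)) P :=
  fun n t ht => hX n (f ∘ t) (hf.comp ht)

section Increments

variable [LinearOrder T] [MeasurableSpace E] [AddGroup E] [MeasurableAdd₂ E] [MeasurableSub₂ E]
  {X : T → Ω → E}

/-- Both families are sums of increments along an increasing enumeration of `{a, c} ∪ I ∪ J`:
the first of those before `c`, the second of those after `c`. -/
theorem HasIndepIncrements.indepFun_sub_finset (hX : HasIndepIncrements X P)
    (hmeas : ∀ t, Measurable (X t)) {a c : T} (I : Finset (Icc a c)) (J : Finset (Ici c)) :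
    IndepFun (fun ω (r : I) => X r ω - X a ω) (fun ω (r : J) => X r ω - X c ω) P := by
  classical
  set F : Finset T := insert a (insert c (I.image (↑) ∪ J.image (↑)))
  obtain ⟨τ, idx, hτ, hidx, hτidx⟩ := F.exists_monotone_enum ⟨a, Finset.mem_insert_self _ _⟩
  let Y : ℕ → Ω → E := fun l ω => X (τ (l + 1)) ω - X (τ l) ω
  have hmeas_sub : ∀ (L : Set ℕ) (r r' : F), r ≤ r' → (∀ l, idx r ≤ l → l < idx r' → l ∈ L) →
      Measurable[⨆ l ∈ L, (inferInstance : MeasurableSpace E).comap (Y l)]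
        fun ω => X r' ω - X r ω := by
    intro L r r' hrr' hL
    have := measurable_sub_of_measurable_increments (x := fun m => X (τ m)) (hidx hrr')
      fun l hl hlr' => measurable_iff_comap_le.2 (le_iSup₂ (f := fun l (_ : l ∈ L) =>
        (inferInstance : MeasurableSpace E).comap (Y l)) l (hL l hl hlr'))
    simpa only [hτidx] using this
  have haF : a ∈ F := by simp [F]
  have hcF : c ∈ F := by simp [F]
  rw [IndepFun_iff_Indep]
  refine indep_of_indep_of_le (indep_iSup_of_disjoint (fun l => ((hmeas _).sub (hmeas _)).comap_le)
    (hX.nat hτ).iIndep (Iio_disjoint_Ici le_rfl : Disjoint (Iio (idx ⟨c, hcF⟩)) _)) ?_ ?_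
  · refine (@measurable_pi_lambda _ _ _ (_) _ _ fun r => ?_).comap_le
    have hr : (r : T) ∈ F := Finset.mem_insert_of_mem (Finset.mem_insert_of_mem
      (Finset.mem_union_left _ (Finset.mem_image_of_mem _ r.2)))
    exact hmeas_sub _ ⟨a, haF⟩ ⟨r, hr⟩ r.1.2.1 fun l _ hl =>
      hl.trans_le (hidx (show (⟨r, hr⟩ : F) ≤ ⟨c, hcF⟩ from r.1.2.2))
  · refine (@measurable_pi_lambda _ _ _ (_) _ _ fun r => ?_).comap_le
    have hr : (r : T) ∈ F := Finset.mem_insert_of_mem (Finset.mem_insert_of_mem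
      (Finset.mem_union_right _ (Finset.mem_image_of_mem _ r.2)))
    exact hmeas_sub _ ⟨c, hcF⟩ ⟨r, hr⟩ r.1.2 fun l hl _ => hl

theorem HasIndepIncrements.indepFun_past_future [IsProbabilityMeasure P]
    (hX : HasIndepIncrements X P) (hmeas : ∀ t, Measurable (X t)) (a c : T) :
    IndepFun (fun ω (r : Icc a c) => X r ω - X a ω) (fun ω (r : Ici c) => X r ω - X c ω) P :=
  IndepFun.process_indepFun_process (fun r => (hmeas r).sub (hmeas a))
    (fun r => (hmeas r).sub (hmeas c)) (hX.indepFun_sub_finset hmeas)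

end Increments

section Atoms

variable [IsFiniteMeasure P] [MeasurableSpace E] [AddCommGroup E] [MeasurableSingletonClass E]
  [MeasurableSub₂ E]

theorem IndepFun.measure_eq_eq_zero {X Y : Ω → E} (hX : Measurable X) (hY : Measurable Y)
    (hXY : IndepFun X Y P) [NullSingletonClass (P.map X)] : P {ω | X ω = Y ω} = 0 := by
  have hdiag : MeasurableSet {z : E × E | z.1 = z.2} :=
    measurableSet_eq_fun measurable_fst measurable_snd
  have hslice : ∀ y : E, (fun x => (x, y)) ⁻¹' {z : E × E | z.1 = z.2} = {y} := fun y => by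
    ext x; simp
  rw [show {ω | X ω = Y ω} = (fun ω => (X ω, Y ω)) ⁻¹' {z | z.1 = z.2} from rfl,
    ← Measure.map_apply (hX.prodMk hY) hdiag,
    (indepFun_iff_map_prod_eq_prod_map_map hX.aemeasurable hY.aemeasurable).1 hXY,
    Measure.prod_apply_symm hdiag]
  simp [hslice]

theorem IndepFun.nullSingletonClass_map_sub {U X : Ω → E} (hU : Measurable U)
    (hX : Measurable X) (hUX : IndepFun U X P) [NullSingletonClass (P.map X)] :
    NullSingletonClass (P.map fun ω => U ω - X ω) where
  measure_singleton w := by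
    rw [Measure.map_apply (hU.fun_sub hX) (measurableSet_singleton w)]
    have := (hUX.symm.comp measurable_id (measurable_sub_const w)).measure_eq_eq_zero hX
      (hU.sub_const w)
    convert this using 2
    ext ω
    show U ω - X ω = w ↔ X ω = U ω - w
    exact ⟨fun h => by rw [← h, sub_sub_cancel], fun h => by rw [h, sub_sub_cancel]⟩

end Atoms

section Argmin

variable [IsProbabilityMeasure P] [LinearOrder T] [MeasurableSpace E] [AddCommGroup E]
  [MeasurableSingletonClass E] [MeasurableAdd₂ E] [MeasurableSub₂ E] {X : T → Ω → E}

/-- Write `φ(past) - (X q - X a)` as `(φ(past) - (X p - X a)) - (X q - X p)`: the two terms are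
independent and the second is atomless, so the whole is atomless; and it is independent of the
increments after `q`. -/
theorem HasIndepIncrements.measure_sub_eq_eq_zero (hX : HasIndepIncrements X P)
    (hmeas : ∀ t, Measurable (X t)) {a p q : T} (hap : a ≤ p) (hpq : p ≤ q)
    [NullSingletonClass (P.map fun ω => X q ω - X p ω)]
    {φ : (Icc a p → E) → E} {ψ : (Ici q → E) → E} (hφ : Measurable φ) (hψ : Measurable ψ) :
    P {ω | φ (fun r => X r ω - X a ω) - (X q ω - X a ω) = ψ (fun r => X r ω - X q ω)} = 0 := by
  have hpast : ∀ c, Measurable fun ω (r : Icc a c) => X r ω - X a ω := fun c =>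
    measurable_pi_lambda _ fun r => (hmeas r).sub (hmeas a)
  have hfuture : ∀ c, Measurable fun ω (r : Ici c) => X r ω - X c ω := fun c =>
    measurable_pi_lambda _ fun r => (hmeas r).sub (hmeas c)
  have hU : IndepFun (fun ω => φ (fun r => X r ω - X a ω) - (X p ω - X a ω))
      (fun ω => X q ω - X p ω) P :=
    (hX.indepFun_past_future hmeas a p).comp
      (φ := fun (v : Icc a p → E) => φ v - v ⟨p, hap, le_rfl⟩)
      (ψ := fun (w : Ici p → E) => w ⟨q, hpq⟩) (by fun_prop) (by fun_prop)
  have hW := hU.nullSingletonClass_map_sub (by fun_prop) (by fun_prop)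
  have hWZ : IndepFun (fun ω => φ (fun r => X r ω - X a ω) - (X q ω - X a ω))
      (fun ω => ψ (fun r => X r ω - X q ω)) P :=
    (hX.indepFun_past_future hmeas a q).comp
      (φ := fun (v : Icc a q → E) => φ (fun r => v (inclusion (Icc_subset_Icc_right hpq) r)) -
        v ⟨q, hap.trans hpq, le_rfl⟩) (by fun_prop) hψ
  have hsplit : (fun ω => φ (fun r => X r ω - X a ω) - (X p ω - X a ω) - (X q ω - X p ω)) =
      fun ω => φ (fun r => X r ω - X a ω) - (X q ω - X a ω) := by
    funext ω; abel
  rw [hsplit] at hW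
  exact hWZ.measure_eq_eq_zero (by fun_prop) (by fun_prop)

theorem HasIndepIncrements.measure_iInf_rat_sub_eq_zero {X : ℝ → Ω → ℝ}
    (hX : HasIndepIncrements X P) (hmeas : ∀ t, Measurable (X t)) {x y : ℝ} {p q : ℚ}
    (hxp : x ≤ p) (hpq : (p : ℝ) ≤ q) [NullSingletonClass (P.map fun ω => X q ω - X p ω)] :
    P {ω | (⨅ r : {r : ℚ // (r : ℝ) ∈ Icc x p}, (X r ω - X x ω)) - (X q ω - X x ω) =
      ⨅ r : {r : ℚ // (r : ℝ) ∈ Icc (q : ℝ) y}, (X r ω - X q ω)} = 0 :=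
  hX.measure_sub_eq_eq_zero hmeas hxp hpq
    (φ := fun v => ⨅ r : {r : ℚ // (r : ℝ) ∈ Icc x p}, v ⟨r, r.2⟩)
    (ψ := fun v => ⨅ r : {r : ℚ // (r : ℝ) ∈ Icc (q : ℝ) y}, v ⟨r, r.2.1⟩)
    (Measurable.iInf fun _ => measurable_pi_apply _)
    (Measurable.iInf fun _ => measurable_pi_apply _)

theorem HasIndepIncrements.measure_nonunique_argmin_eq_zero {X : ℝ → Ω → ℝ} {x y : ℝ}
    (hxy : x ≤ y) (hX : HasIndepIncrements (fun r : Icc x y => X r) P)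
    (hmeas : ∀ t, Measurable (X t))
    (hatom : ∀ p ∈ Icc x y, ∀ q ∈ Icc x y, p < q →
      NullSingletonClass (P.map fun ω => X q ω - X p ω))
    (hcont : ∀ᵐ ω ∂P, ContinuousOn (fun t => X t ω) (Icc x y)) :
    P {ω | ∃ s ∈ Icc x y, ∃ t ∈ Icc x y, s ≠ t ∧
      (∀ u ∈ Icc x y, X s ω ≤ X u ω) ∧ X s ω = X t ω} = 0 := by
  -- `Z` continues the process constantly outside `[x, y]`, so its increments are independent
  -- along all of `ℝ`.
  set Z : ℝ → Ω → ℝ := fun r => X (projIcc x y hxy r)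
  have hZ : HasIndepIncrements Z P := hX.comp_monotone (monotone_projIcc hxy)
  have hZX : ∀ r ∈ Icc x y, Z r = X r := fun r hr => by simp [Z, projIcc_of_mem hxy hr]
  let E : ℚ → ℚ → Set Ω := fun p q =>
    {ω | (⨅ r : {r : ℚ // (r : ℝ) ∈ Icc x p}, (Z r ω - Z x ω)) - (Z q ω - Z x ω) =
      ⨅ r : {r : ℚ // (r : ℝ) ∈ Icc (q : ℝ) y}, (Z r ω - Z q ω)}
  have hE : ∀ p q : ℚ, x < p → (p : ℝ) < q → (q : ℝ) < y → P (E p q) = 0 := by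
    intro p q hxp hpq hqy
    have hp : (p : ℝ) ∈ Icc x y := ⟨hxp.le, (hpq.trans hqy).le⟩
    have hq : (q : ℝ) ∈ Icc x y := ⟨(hxp.trans hpq).le, hqy.le⟩
    have : NullSingletonClass (P.map fun ω => Z q ω - Z p ω) := by
      rw [hZX q hq, hZX p hp]; exact hatom p hp q hq hpq
    exact hZ.measure_iInf_rat_sub_eq_zero (fun r => hmeas _) hxp.le hpq.le
  refine measure_mono_null (t := (⋃ (p : ℚ) (q : ℚ) (_ : x < p ∧ (p : ℝ) < q ∧ (q : ℝ) < y),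
      E p q) ∪ {ω | ¬ContinuousOn (fun t => X t ω) (Icc x y)}) ?_
    (measure_union_null (measure_iUnion_null fun p => measure_iUnion_null fun q =>
      measure_iUnion_null fun h => hE p q h.1 h.2.1 h.2.2) (ae_iff.1 hcont))
  rintro ω ⟨s, hs, t, ht, hst, hmin, heq⟩
  refine (em (ContinuousOn (fun t => X t ω) (Icc x y))).elim (fun hc => Or.inl ?_) Or.inr
  obtain ⟨p, q, hxp, hpq, hqy, h⟩ := exists_rat_iInf_sub_eq_of_isMinOn
    (g := fun u => Z u ω - Z x ω) ((hc.congr fun u hu => by rw [hZX u hu]).sub continuousOn_const)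
    hs ht hst (isMinOn_iff.2 fun u hu => by simp only [hZX _ hu, hZX _ hs]; linarith [hmin u hu])
    (by simp only [hZX _ hs, hZX _ ht, heq])
  simp only [sub_sub_sub_cancel_right] at h
  exact mem_iUnion₂.2 ⟨p, q, mem_iUnion.2 ⟨⟨hxp, hpq, hqy⟩, h⟩⟩

end Argmin

end ProbabilityTheory

section StandardBM

variable {Ω : Type*} [MeasurableSpace Ω] {P : Measure Ω} {B : ℝ → Ω → ℝ} {S : Set ℝ}

theorem IsStandardBM.hasIndepIncrements (hB : IsStandardBM P B S) :
    HasIndepIncrements (fun r : S => B r) P :=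
  fun n t ht => hB.2.2.2.1 n (fun i => t i) ((Subtype.mono_coe _).comp ht) fun i => (t i).2

theorem IsStandardBM.nullSingletonClass_map_sub (hB : IsStandardBM P B S) {p q : ℝ}
    (hp : p ∈ S) (hq : q ∈ S) (hpq : p < q) :
    NullSingletonClass (P.map fun ω => B q ω - B p ω) := by
  rw [hB.2.2.2.2 p q hp hq hpq.le]
  exact nullSingletonClass_gaussianReal (by simpa using hpq)

end StandardBM

/-- A standard Brownian motion on `[0,1]` almost surely attains its minimum
over `[0,1]` at a unique point. -/
theorem brownian_motion_unique_argmin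
    {Ω : Type*} [MeasurableSpace Ω] (P : Measure Ω) [IsProbabilityMeasure P]
    (B : ℝ → Ω → ℝ) (hB : IsStandardBM P B (Set.Icc (0:ℝ) 1)) :
    P {ω | ∃ s ∈ Set.Icc (0:ℝ) 1, ∃ t ∈ Set.Icc (0:ℝ) 1, s ≠ t ∧
      (∀ u ∈ Set.Icc (0:ℝ) 1, B s ω ≤ B u ω) ∧ B s ω = B t ω} = 0 :=
  hB.hasIndepIncrements.measure_nonunique_argmin_eq_zero zero_le_one hB.1
    (fun _ hp _ hq hpq => hB.nullSingletonClass_map_sub hp hq hpq) hB.2.2.1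
end
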